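/- Let I be a finite set, h : I → ℝ with h_E > 0 for all E ∈ I, d : I → ℝ with d_E ≥ 0 for all E ∈ I, and let r ≥ 2 and δ ≥ 0 be real numbers. Then Σ_{E∈I} (δ^r + h_E^{−r} d_E^r)^{(r−2)/r} d_E² ≤ ( Σ_{E∈I} h_E² δ^r + Σ_{E∈I} h_E^{2−r} d_E^r )^{(r−2)/r} · ( Σ_{E∈I} h_E^{2−r} d_E^r )^{2/r}. -/

import Mathlib

/-!
With `a_E = h_E² δ^r + h_E^{2−r} d_E^r` and `b_E = h_E^{2−r} d_E^r`, the powers of `h_E` cancel in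
`a_E^{(r−2)/r} b_E^{2/r}`, which is therefore the `E`-th term of the left-hand side. Hölder's
inequality with the conjugate exponents `r/(r−2)` and `r/2` then bounds `∑ a_E^{(r−2)/r} b_E^{2/r}`.
-/

open Finset Real

theorem Real.sum_rpow_mul_rpow_le_of_add_eq_one {ι : Type*} (s : Finset ι) {a b : ι → ℝ}
    (ha : ∀ i ∈ s, 0 ≤ a i) (hb : ∀ i ∈ s, 0 ≤ b i) {p q : ℝ} (hp : 0 ≤ p) (hq : 0 ≤ q)
    (hpq : p + q = 1) :
    ∑ i ∈ s, a i ^ p * b i ^ q ≤ (∑ i ∈ s, a i) ^ p * (∑ i ∈ s, b i) ^ q := by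
  rcases hp.eq_or_lt with rfl | hp
  · simp [show q = 1 by linarith]
  rcases hq.eq_or_lt with rfl | hq
  · simp [show p = 1 by linarith]
  have hconj : p⁻¹.HolderConjugate q⁻¹ := by
    rw [Real.holderConjugate_iff]
    exact ⟨by rw [lt_inv_comm₀ one_pos hp]; linarith, by simp [hpq]⟩
  have holder := inner_le_Lp_mul_Lq_of_nonneg s hconj (fun i hi => rpow_nonneg (ha i hi) p)
    (fun i hi => rpow_nonneg (hb i hi) q)
  rwa [sum_congr rfl fun i hi => rpow_rpow_inv (ha i hi) hp.ne',
    sum_congr rfl fun i hi => rpow_rpow_inv (hb i hi) hq.ne', one_div, one_div, inv_inv,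
    inv_inv] at holder

theorem Real.sq_mul_add_rpow_neg_mul {x : ℝ} (hx : 0 < x) (r y z : ℝ) :
    x ^ 2 * (y + x ^ (-r) * z) = x ^ 2 * y + x ^ (2 - r) * z := by
  rw [sub_eq_add_neg, rpow_add hx, rpow_two]
  ring

theorem Real.rpow_mul_sq_eq {x c d : ℝ} (hx : 0 < x) (hc : 0 ≤ c) (hd : 0 ≤ d) {r : ℝ}
    (hr : r ≠ 0) :
    c ^ ((r - 2) / r) * d ^ 2 =
      (x ^ 2 * c) ^ ((r - 2) / r) * (x ^ (2 - r) * d ^ r) ^ (2 / r) := by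
  have hx_cancel : x ^ ((2 : ℝ) * ((r - 2) / r)) * x ^ ((2 - r) * (2 / r)) = 1 := by
    rw [← rpow_add hx, ← rpow_zero x]
    congr 1
    field_simp
    ring
  rw [mul_rpow (by positivity) hc, mul_rpow (by positivity) (by positivity),
    ← rpow_two x, ← rpow_mul hx.le, ← rpow_mul hx.le, ← rpow_mul hd, mul_div_cancel₀ _ hr,
    rpow_two d, mul_mul_mul_comm, hx_cancel, one_mul]

theorem discrete_error_measure_comparison
    {ι : Type*} [Fintype ι]
    (h d : ι → ℝ) (hh : ∀ E, 0 < h E) (hd : ∀ E, 0 ≤ d E)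
    (r δ : ℝ) (hr : 2 ≤ r) (hδ : 0 ≤ δ) :
    ∑ E, (δ ^ r + h E ^ (-r) * d E ^ r) ^ ((r - 2) / r) * d E ^ 2 ≤
      ((∑ E, h E ^ 2 * δ ^ r) + ∑ E, h E ^ (2 - r) * d E ^ r) ^ ((r - 2) / r) *
        (∑ E, h E ^ (2 - r) * d E ^ r) ^ (2 / r) := by
  have hr0 : 0 < r := by linarith
  have hb : ∀ E, 0 ≤ h E ^ (2 - r) * d E ^ r := fun E =>
    mul_nonneg (rpow_nonneg (hh E).le _) (rpow_nonneg (hd E) _)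
  have hc : ∀ E, 0 ≤ δ ^ r + h E ^ (-r) * d E ^ r := fun E =>
    add_nonneg (rpow_nonneg hδ _) (mul_nonneg (rpow_nonneg (hh E).le _) (rpow_nonneg (hd E) _))
  calc ∑ E, (δ ^ r + h E ^ (-r) * d E ^ r) ^ ((r - 2) / r) * d E ^ 2
      = ∑ E, (h E ^ 2 * δ ^ r + h E ^ (2 - r) * d E ^ r) ^ ((r - 2) / r) *
          (h E ^ (2 - r) * d E ^ r) ^ (2 / r) :=
        sum_congr rfl fun E _ => by
          rw [rpow_mul_sq_eq (hh E) (hc E) (hd E) hr0.ne', sq_mul_add_rpow_neg_mul (hh E)]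
    _ ≤ (∑ E, (h E ^ 2 * δ ^ r + h E ^ (2 - r) * d E ^ r)) ^ ((r - 2) / r) *
          (∑ E, h E ^ (2 - r) * d E ^ r) ^ (2 / r) :=
        sum_rpow_mul_rpow_le_of_add_eq_one _
          (fun E _ => add_nonneg (mul_nonneg (by positivity) (rpow_nonneg hδ _)) (hb E))
          (fun E _ => hb E) (div_nonneg (by linarith) hr0.le) (div_nonneg zero_le_two hr0.le)
          (by field_simp; ring)
    _ = _ := by rw [sum_add_distrib]
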